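/- arXiv:2505.22213 — 3 statements merged into one kernel-verified Lean document; each statement's English description precedes it below -/
import Mathlib

section
/- Let s ≻ t be ground terms. Then, for the rewrite systems of the model construction, the following are equivalent: t is irreducible in I_t; t is irreducible in I_s; t is irreducible in I_ω. -/
set_option autoImplicit false

namespace PaRC

/-- First-order terms over a signature `F` with arity function `ar`;
variables are natural numbers. -/
inductive Trm (F : Type) (ar : F → ℕ) : Type
  | var : ℕ → Trm F ar
  | app : (f : F) → (Fin (ar f) → Trm F ar) → Trm F ar

variable {F : Type} {ar : F → ℕ}

/-- Substitutions. -/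
abbrev Subst (F : Type) (ar : F → ℕ) : Type := ℕ → Trm F ar

/-- Applying a substitution to a term. -/
def Trm.subst (σ : Subst F ar) : Trm F ar → Trm F ar
  | .var x => σ x
  | .app f a => .app f (fun i => (a i).subst σ)

/-- Composition of substitutions. -/
def Subst.comp (σ τ : Subst F ar) : Subst F ar := fun x => Trm.subst τ (σ x)

/-- A term is ground if it contains no variables. -/
def Trm.IsGround : Trm F ar → Prop
  | .var _ => False
  | .app _ a => ∀ i, (a i).IsGround

/-- Free variables of a term. -/
def Trm.fvars : Trm F ar → Set ℕ
  | .var x => {x}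
  | .app _ a => ⋃ i, (a i).fvars

/-- Subterm at a position (list of argument indices). -/
def Trm.atPos : Trm F ar → List ℕ → Option (Trm F ar)
  | t, [] => some t
  | .var _, _ :: _ => none
  | .app f a, i :: p => if h : i < ar f then Trm.atPos (a ⟨i, h⟩) p else none

/-- Replace the subterm at a given position. -/
def Trm.replace : Trm F ar → List ℕ → Trm F ar → Trm F ar
  | _, [], u => u
  | .var x, _ :: _, _ => .var x
  | .app f a, i :: p, u =>
      if h : i < ar f then
        .app f (Function.update a ⟨i, h⟩ (Trm.replace (a ⟨i, h⟩) p u))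
      else .app f a

/-- An equality literal: polarity together with the two sides. -/
structure Lit (F : Type) (ar : F → ℕ) : Type where
  pos : Bool
  lhs : Trm F ar
  rhs : Trm F ar

def Lit.subst (σ : Subst F ar) (L : Lit F ar) : Lit F ar :=
  ⟨L.pos, Trm.subst σ L.lhs, Trm.subst σ L.rhs⟩

def Lit.IsGround (L : Lit F ar) : Prop := L.lhs.IsGround ∧ L.rhs.IsGround

def Lit.fvars (L : Lit F ar) : Set ℕ := L.lhs.fvars ∪ L.rhs.fvars

/-- A clause is a (finite) multiset of literals. -/
abbrev Clause (F : Type) (ar : F → ℕ) : Type := Multiset (Lit F ar)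

def Clause.subst (σ : Subst F ar) (C : Clause F ar) : Clause F ar := C.map (Lit.subst σ)

def Clause.IsGround (C : Clause F ar) : Prop := ∀ L ∈ C, L.IsGround

def Clause.fvars (C : Clause F ar) : Set ℕ := {x | ∃ L ∈ C, x ∈ L.fvars}

/-- A substitution is grounding for a clause if the instance is ground. -/
def GroundingFor (θ : Subst F ar) (C : Clause F ar) : Prop :=
  Clause.IsGround (Clause.subst θ C)

/-- A term occurs in a clause if it is a subterm of a side of one of its literals. -/
def OccursIn (u : Trm F ar) (C : Clause F ar) : Prop :=
  ∃ L ∈ C, ∃ p, Trm.atPos L.lhs p = some u ∨ Trm.atPos L.rhs p = some u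

/-! ### Semantics: Σ-algebras, entailment and satisfiability -/

/-- A Σ-algebra (first-order structure for the purely equational signature). -/
structure Alg (F : Type) (ar : F → ℕ) : Type 1 where
  carrier : Type
  nonempty : Nonempty carrier
  interp : (f : F) → (Fin (ar f) → carrier) → carrier

def Trm.eval (A : Alg F ar) (v : ℕ → A.carrier) : Trm F ar → A.carrier
  | .var x => v x
  | .app f a => A.interp f (fun i => (a i).eval A v)

def Lit.holds (A : Alg F ar) (v : ℕ → A.carrier) (L : Lit F ar) : Prop :=
  if L.pos then L.lhs.eval A v = L.rhs.eval A v else L.lhs.eval A v ≠ L.rhs.eval A v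

/-- A clause is true in an algebra if it is true under every valuation
(variables are implicitly universally quantified). -/
def Clause.validIn (A : Alg F ar) (C : Clause F ar) : Prop :=
  ∀ v : ℕ → A.carrier, ∃ L ∈ C, Lit.holds A v L

/-- First-order entailment between a set of clauses and a clause. -/
def Entails (S : Set (Clause F ar)) (D : Clause F ar) : Prop :=
  ∀ A : Alg F ar, (∀ C ∈ S, Clause.validIn A C) → Clause.validIn A D

/-- Satisfiability of a set of clauses. -/
def Satisfiable (S : Set (Clause F ar)) : Prop :=
  ∃ A : Alg F ar, ∀ C ∈ S, Clause.validIn A C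

/-! ### Simplification orders and their bag extensions -/

/-- A simplification order: a reduction ordering that is total on ground terms
and has the subterm property. -/
structure SimpOrd (F : Type) (ar : F → ℕ) : Type where
  gt : Trm F ar → Trm F ar → Prop
  trans : ∀ {s t u : Trm F ar}, gt s t → gt t u → gt s u
  irrefl : ∀ s : Trm F ar, ¬ gt s s
  wf : WellFounded (fun s t : Trm F ar => gt t s)
  substStable : ∀ (σ : Subst F ar) {s t : Trm F ar}, gt s t →
    gt (Trm.subst σ s) (Trm.subst σ t)
  ctxStable : ∀ (s : Trm F ar) (p : List ℕ) {l r : Trm F ar}, (Trm.atPos s p).isSome →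
    gt l r → gt (Trm.replace s p l) (Trm.replace s p r)
  subterm : ∀ {s t : Trm F ar} (p : List ℕ), Trm.atPos s p = some t → s ≠ t → gt s t
  totalGround : ∀ {s t : Trm F ar}, s.IsGround → t.IsGround → s ≠ t → gt s t ∨ gt t s

/-- Bag (Dershowitz–Manna multiset) extension of an ordering: `N > M`. -/
def MultGT {α : Type} (r : α → α → Prop) (N M : Multiset α) : Prop :=
  ∃ X Y Z : Multiset α, X ≠ 0 ∧ N = Z + X ∧ M = Z + Y ∧ ∀ y ∈ Y, ∃ x ∈ X, r x y

/-- The multiset of terms associated to a literal: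
`{s, t}` for `s ≈ t` and `{s, s, t, t}` for `s ≉ t`. -/
def Lit.ms (L : Lit F ar) : Multiset (Trm F ar) :=
  if L.pos then {L.lhs, L.rhs} else {L.lhs, L.lhs, L.rhs, L.rhs}

/-- The induced ordering on literals. -/
def litGT (O : SimpOrd F ar) (L M : Lit F ar) : Prop := MultGT O.gt L.ms M.ms

/-- The induced ordering on clauses. -/
def clauseGT (O : SimpOrd F ar) (C D : Clause F ar) : Prop := MultGT (litGT O) C D

def clauseGE (O : SimpOrd F ar) (C D : Clause F ar) : Prop := clauseGT O C D ∨ C = D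

/-- A ground clause `D` is redundant w.r.t. a set `S` of ground clauses if it is
entailed by finitely many clauses of `S` that are all smaller than `D`. -/
def Redundant (O : SimpOrd F ar) (S : Set (Clause F ar)) (D : Clause F ar) : Prop :=
  ∃ Cs : List (Clause F ar), (∀ C ∈ Cs, C ∈ S) ∧
    Entails {C | C ∈ Cs} D ∧ ∀ C ∈ Cs, clauseGT O D C

/-! ### Redundancy formulas and partial clauses -/

/-- Redundancy formulas: first-order formulas over the term algebra extended with
the interpreted predicates `≻` (the simplification order) and equality. -/
inductive RForm (F : Type) (ar : F → ℕ) : Type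
  | falsum : RForm F ar
  | verum : RForm F ar
  | eq (s t : Trm F ar) : RForm F ar
  | gt (s t : Trm F ar) : RForm F ar
  | and (a b : RForm F ar) : RForm F ar
  | or (a b : RForm F ar) : RForm F ar
  | ex (x : ℕ) (a : RForm F ar) : RForm F ar

def RForm.subst (σ : Subst F ar) : RForm F ar → RForm F ar
  | .falsum => .falsum
  | .verum => .verum
  | .eq s t => .eq (Trm.subst σ s) (Trm.subst σ t)
  | .gt s t => .gt (Trm.subst σ s) (Trm.subst σ t)
  | .and a b => .and (a.subst σ) (b.subst σ)
  | .or a b => .or (a.subst σ) (b.subst σ)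
  | .ex x a => .ex x (a.subst fun y => if y = x then Trm.var x else σ y)

def RForm.fvars : RForm F ar → Set ℕ
  | .falsum => ∅
  | .verum => ∅
  | .eq s t => s.fvars ∪ t.fvars
  | .gt s t => s.fvars ∪ t.fvars
  | .and a b => a.fvars ∪ b.fvars
  | .or a b => a.fvars ∪ b.fvars
  | .ex x a => a.fvars \ {x}

/-- Truth of a redundancy formula in the extended term algebra `T_R(Σ)`,
under a valuation `v` mapping variables to (ground) terms. -/
def RForm.realize (O : SimpOrd F ar) (v : Subst F ar) : RForm F ar → Prop
  | .falsum => False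
  | .verum => True
  | .eq s t => Trm.subst v s = Trm.subst v t
  | .gt s t => O.gt (Trm.subst v s) (Trm.subst v t)
  | .and a b => a.realize O v ∧ b.realize O v
  | .or a b => a.realize O v ∨ b.realize O v
  | .ex x a => ∃ g : Trm F ar, g.IsGround ∧ a.realize O (Function.update v x g)

/-- `σ ⊨ R`: every ground instance of `Rσ` is true in `T_R(Σ)`. -/
def RSat (O : SimpOrd F ar) (σ : Subst F ar) (R : RForm F ar) : Prop :=
  ∀ v : Subst F ar, (∀ x, (v x).IsGround) → RForm.realize O v (RForm.subst σ R)

theorem RForm.falsum_fvars_sub (s : Set ℕ) : RForm.fvars (.falsum : RForm F ar) ⊆ s := by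
  intro x hx; simp [RForm.fvars] at hx

/-- `s ⪰ t` as a redundancy formula. -/
def RForm.ge (s t : Trm F ar) : RForm F ar := .or (.gt s t) (.eq s t)

/-- `(s ≐ t) ⪰ l` as a redundancy formula. -/
def Lit.geForm (L : Lit F ar) (l : Trm F ar) : RForm F ar :=
  .or (RForm.ge L.lhs l) (RForm.ge L.rhs l)

/-- `(s ≐ t) ≻ l` as a redundancy formula. -/
def Lit.gtForm (L : Lit F ar) (l : Trm F ar) : RForm F ar :=
  .or (.gt L.lhs l) (.gt L.rhs l)

/-- `C ⪰ l` as a redundancy formula (disjunction over the literals of `C`). -/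
noncomputable def Clause.geForm (C : Clause F ar) (l : Trm F ar) : RForm F ar :=
  C.toList.foldr (fun L acc => RForm.or (Lit.geForm L l) acc) RForm.falsum

/-- `C ≻ l` as a redundancy formula (disjunction over the literals of `C`). -/
noncomputable def Clause.gtForm (C : Clause F ar) (l : Trm F ar) : RForm F ar :=
  C.toList.foldr (fun L acc => RForm.or (Lit.gtForm L l) acc) RForm.falsum

/-- A partial clause `C ⋈ R`: a clause together with a redundancy formula all of
whose free variables occur in the clause. -/
structure PClause (F : Type) (ar : F → ℕ) : Type where
  cl : Clause F ar
  rf : RForm F ar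
  hfv : RForm.fvars rf ⊆ Clause.fvars cl

/-- `⌊C ⋈ R⌋`: the ground instances `Cθ` with `θ ⊭ R`. -/
def pgnd (O : SimpOrd F ar) (pc : PClause F ar) : Set (Clause F ar) :=
  {D | ∃ θ : Subst F ar, D = Clause.subst θ pc.cl ∧ Clause.IsGround D ∧ ¬ RSat O θ pc.rf}

/-- `⌊S⌋` for a set of partial clauses. -/
def gndS (O : SimpOrd F ar) (S : Set (PClause F ar)) : Set (Clause F ar) :=
  ⋃ pc ∈ S, pgnd O pc

/-- `S*`: all ground instances of clauses occurring in `S`. -/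
def gstar (S : Set (PClause F ar)) : Set (Clause F ar) :=
  {D | ∃ pc ∈ S, ∃ θ : Subst F ar, D = Clause.subst θ pc.cl ∧ Clause.IsGround D}

/-! ### The PaRC calculus -/

def IsUnifier (σ : Subst F ar) (s t : Trm F ar) : Prop := Trm.subst σ s = Trm.subst σ t

def IsMGU (σ : Subst F ar) (s t : Trm F ar) : Prop :=
  IsUnifier σ s t ∧ ∀ η : Subst F ar, IsUnifier η s t → ∃ μ : Subst F ar, η = Subst.comp σ μ

/-- A literal selection function satisfying the standard condition w.r.t. `≻`. -/
structure SelFun (F : Type) (ar : F → ℕ) (O : SimpOrd F ar) : Type where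
  sel : Clause F ar → Set (Lit F ar)
  subset : ∀ C : Clause F ar, sel C ⊆ {L | L ∈ C}
  nonemptyOn : ∀ C : Clause F ar, C ≠ 0 → (sel C).Nonempty
  standard : ∀ C : Clause F ar,
    (∃ L ∈ sel C, L.pos = false) ∨ ∀ L ∈ sel C, ∀ M ∈ C, ¬ litGT O M L

/-- The inference rules of the PaRC calculus on partial clauses.
`Inf O sel prems σ concl` means: there is a PaRC inference with premises `prems`,
most general unifier `σ`, and conclusion `concl`; selected literals are the displayed
first literals of the premises. -/
inductive Inf (O : SimpOrd F ar) (sel : SelFun F ar O) :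
    List (PClause F ar) → Subst F ar → Clause F ar → Prop
  | sup {l r : Trm F ar} {C₁ : Clause F ar} {R₁ : RForm F ar}
      {h₁ : RForm.fvars R₁ ⊆ Clause.fvars (Lit.mk true l r ::ₘ C₁)}
      {b : Bool} {s t : Trm F ar} {C₂ : Clause F ar} {R₂ : RForm F ar}
      {h₂ : RForm.fvars R₂ ⊆ Clause.fvars (Lit.mk b s t ::ₘ C₂)}
      {p : List ℕ} {l' : Trm F ar} {σ : Subst F ar} :
      Trm.atPos s p = some l' →
      (∀ x, l' ≠ .var x) →
      IsMGU σ l l' →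
      Lit.mk true l r ∈ sel.sel (Lit.mk true l r ::ₘ C₁) →
      Lit.mk b s t ∈ sel.sel (Lit.mk b s t ::ₘ C₂) →
      ¬ RSat O σ (RForm.ge r l) →
      ¬ RSat O σ (RForm.ge t s) →
      ¬ RSat O σ (Clause.geForm C₁ l) →
      (b = true → ¬ RSat O σ (Clause.geForm C₂ s)) →
      ¬ RSat O σ R₁ →
      ¬ RSat O σ R₂ →
      Inf O sel [⟨Lit.mk true l r ::ₘ C₁, R₁, h₁⟩, ⟨Lit.mk b s t ::ₘ C₂, R₂, h₂⟩] σ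
        (Clause.subst σ (Lit.mk b (Trm.replace s p r) t ::ₘ (C₁ + C₂)))
  | eqres {s t : Trm F ar} {C : Clause F ar} {R : RForm F ar}
      {h : RForm.fvars R ⊆ Clause.fvars (Lit.mk false s t ::ₘ C)} {σ : Subst F ar} :
      IsMGU σ s t →
      Lit.mk false s t ∈ sel.sel (Lit.mk false s t ::ₘ C) →
      ¬ RSat O σ R →
      Inf O sel [⟨Lit.mk false s t ::ₘ C, R, h⟩] σ (Clause.subst σ C)
  | eqfac {s t s' t' : Trm F ar} {C : Clause F ar} {R : RForm F ar}
      {h : RForm.fvars R ⊆ Clause.fvars (Lit.mk true s t ::ₘ Lit.mk true s' t' ::ₘ C)}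
      {σ : Subst F ar} :
      IsMGU σ s s' →
      Lit.mk true s t ∈ sel.sel (Lit.mk true s t ::ₘ Lit.mk true s' t' ::ₘ C) →
      Lit.mk true s' t' ∈ sel.sel (Lit.mk true s t ::ₘ Lit.mk true s' t' ::ₘ C) →
      ¬ RSat O σ (RForm.ge t s) →
      ¬ RSat O σ (RForm.gt t' t) →
      ¬ RSat O σ (Clause.gtForm C s) →
      ¬ RSat O σ R →
      Inf O sel [⟨Lit.mk true s t ::ₘ Lit.mk true s' t' ::ₘ C, R, h⟩] σ
        (Clause.subst σ (Lit.mk true s t ::ₘ Lit.mk false t t' ::ₘ C))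

/-! ### Saturation -/

/-- A saturation w.r.t. the PaRC calculus: `S 0` consists of partial clauses of the
form `C ⋈ ⊥`, and each step is either an inference step or a redundancy step. -/
structure Saturation (O : SimpOrd F ar) (sel : SelFun F ar O) : Type where
  S : ℕ → Set (PClause F ar)
  init : ∀ pc ∈ S 0, pc.rf = RForm.falsum
  step : ∀ i : ℕ,
    (∃ (prems : List (PClause F ar)) (σ : Subst F ar) (concl : Clause F ar),
        (∀ pc ∈ prems, pc ∈ S i) ∧ Inf O sel prems σ concl ∧
        S (i + 1) = S i ∪ {⟨concl, RForm.falsum, RForm.falsum_fvars_sub _⟩}) ∨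
    (∃ pc ∈ S i, ∃ (R₂ : RForm F ar)
        (h : RForm.fvars (RForm.or pc.rf R₂) ⊆ Clause.fvars pc.cl),
        (∀ θ : Subst F ar, GroundingFor θ pc.cl → RSat O θ R₂ →
          Redundant O (gstar (S i)) (Clause.subst θ pc.cl)) ∧
        S (i + 1) = (S i \ {pc}) ∪ {⟨pc.cl, RForm.or pc.rf R₂, h⟩})

variable {O : SimpOrd F ar} {sel : SelFun F ar O}

/-- `S_ω = ⋃ i, S i`. -/
def Saturation.Somega (𝕊 : Saturation O sel) : Set (PClause F ar) := ⋃ i, 𝕊.S i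

/-- The limit `⋃_{i≥0} ⋂_{j≥i} ⌊S_j⌋` of a saturation. -/
def Saturation.limit (𝕊 : Saturation O sel) : Set (Clause F ar) :=
  ⋃ i : ℕ, ⋂ j : ℕ, ⋂ (_ : j ≥ i), gndS O (𝕊.S j)

/-- A ground clause is persistent if it belongs to the limit. -/
def Saturation.Persistent (𝕊 : Saturation O sel) (C : Clause F ar) : Prop := C ∈ 𝕊.limit

/-- Fairness of a saturation. -/
def Saturation.Fair (𝕊 : Saturation O sel) : Prop :=
  ∀ (prems : List (PClause F ar)) (σ : Subst F ar) (concl : Clause F ar) (ρ : Subst F ar),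
    Inf O sel prems σ concl →
    (∀ pc ∈ prems, 𝕊.Persistent (Clause.subst ρ (Clause.subst σ pc.cl))) →
    ∃ i : ℕ, (⟨concl, RForm.falsum, RForm.falsum_fvars_sub _⟩ : PClause F ar) ∈ 𝕊.S i

/-! ### Ground rewrite systems and the model construction -/

/-- One-step ground rewriting with a set of (ground) rewrite rules. -/
def Rw (I : Set (Trm F ar × Trm F ar)) (s t : Trm F ar) : Prop :=
  ∃ lr ∈ I, ∃ p : List ℕ, Trm.atPos s p = some lr.1 ∧ t = Trm.replace s p lr.2

def RwStar (I : Set (Trm F ar × Trm F ar)) : Trm F ar → Trm F ar → Prop :=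
  Relation.ReflTransGen (Rw I)

/-- A term is irreducible (a normal form) in `I`. -/
def NormalForm (I : Set (Trm F ar × Trm F ar)) (t : Trm F ar) : Prop := ∀ u, ¬ Rw I t u

/-- `s` and `t` have the same normal form in `I`. -/
def SameNF (I : Set (Trm F ar × Trm F ar)) (s t : Trm F ar) : Prop :=
  ∃ u : Trm F ar, RwStar I s u ∧ RwStar I t u ∧ NormalForm I u

/-- Truth of a ground clause in the interpretation given by a rewrite system. -/
def TrueIn (I : Set (Trm F ar × Trm F ar)) (C : Clause F ar) : Prop :=
  ∃ L ∈ C, if L.pos then SameNF I L.lhs L.rhs else ¬ SameNF I L.lhs L.rhs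

def NonOverlapping (I : Set (Trm F ar × Trm F ar)) : Prop :=
  ∀ lr ∈ I, ∀ lr' ∈ I, lr ≠ lr' → ∀ p : List ℕ, Trm.atPos (Prod.fst lr) p ≠ some (Prod.fst lr')

def Terminating (I : Set (Trm F ar × Trm F ar)) : Prop :=
  WellFounded (fun s t : Trm F ar => Rw I t s)

def Confluent (I : Set (Trm F ar × Trm F ar)) : Prop :=
  ∀ a b c : Trm F ar, RwStar I a b → RwStar I a c → ∃ d, RwStar I b d ∧ RwStar I c d

/-- The productivity condition of the model construction: there is a partial clause
`(l₁ ≈ r₁ ∨ C ⋈ R) ∈ S_ω` (with `l₁ ≈ r₁` selected) and a grounding substitution `θ`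
with `l₁θ = l`, `l₁θ ≻ r₁θ`, `l₁θ ≻ Cθ`, `θ ⊭ R`, `I_{≺l} ⊭ Cθ`, producing the rule
`l → rr` where `rr = r₁θ`. -/
def ProducesWith (O : SimpOrd F ar) (sel : SelFun F ar O) (Sω : Set (PClause F ar))
    (Ipre : Set (Trm F ar × Trm F ar)) (l rr : Trm F ar) : Prop :=
  ∃ (l₁ r₁ : Trm F ar) (C : Clause F ar) (R : RForm F ar)
    (h : RForm.fvars R ⊆ Clause.fvars (Lit.mk true l₁ r₁ ::ₘ C)) (θ : Subst F ar),
    (⟨Lit.mk true l₁ r₁ ::ₘ C, R, h⟩ : PClause F ar) ∈ Sω ∧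
    Lit.mk true l₁ r₁ ∈ sel.sel (Lit.mk true l₁ r₁ ::ₘ C) ∧
    GroundingFor θ (Lit.mk true l₁ r₁ ::ₘ C) ∧
    Trm.subst θ l₁ = l ∧
    O.gt (Trm.subst θ l₁) (Trm.subst θ r₁) ∧
    (∀ L ∈ Clause.subst θ C, O.gt (Trm.subst θ l₁) L.lhs ∧ O.gt (Trm.subst θ l₁) L.rhs) ∧
    ¬ RSat O θ R ∧
    ¬ TrueIn Ipre (Clause.subst θ C) ∧
    rr = Trm.subst θ r₁

/-- The rewrite system `I_l` of the model construction, defined by well-founded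
recursion on `≻`. -/
noncomputable def Interp (O : SimpOrd F ar) (sel : SelFun F ar O)
    (Sω : Set (PClause F ar)) : Trm F ar → Set (Trm F ar × Trm F ar) :=
  WellFounded.fix (C := fun _ => Set (Trm F ar × Trm F ar)) O.wf
    (fun l Irec =>
      let Ipre : Set (Trm F ar × Trm F ar) := ⋃ (r : Trm F ar), ⋃ (h : O.gt l r), Irec r h
      letI := Classical.propDecidable
      if h : NormalForm Ipre l ∧ ∃ rr, ProducesWith O sel Sω Ipre l rr then
        Ipre ∪ {(l, h.2.choose)}
      else Ipre)

/-- The rewrite system `I_{≺l}` of the model construction. -/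
noncomputable def IPre (O : SimpOrd F ar) (sel : SelFun F ar O)
    (Sω : Set (PClause F ar)) (l : Trm F ar) : Set (Trm F ar × Trm F ar) :=
  ⋃ (r : Trm F ar), ⋃ (_ : O.gt l r), Interp O sel Sω r

/-- The rewrite system `I_ω = ⋃_l I_l` of the model construction. -/
noncomputable def IOmega (O : SimpOrd F ar) (sel : SelFun F ar O)
    (Sω : Set (PClause F ar)) : Set (Trm F ar × Trm F ar) :=
  ⋃ (l : Trm F ar), Interp O sel Sω l


/-! The systems `I_l` increase along `≻`, and a rule `l → r` can only enter the construction at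
stage `l`. A rule rewriting `t` matches a subterm of `t`, so by the subterm property its
left-hand side is `⪯ t` and the rule already lies in `I_t`. Hence `I_t ⊆ I_s ⊆ I_ω` offer the
same rules for rewriting `t`. -/

theorem NormalForm.anti {I J : Set (Trm F ar × Trm F ar)} (hIJ : I ⊆ J) {t : Trm F ar}
    (h : NormalForm J t) : NormalForm I t :=
  fun u ⟨lr, hlr, p, hpos, heq⟩ => h u ⟨lr, hIJ hlr, p, hpos, heq⟩

section Interp

variable {O : SimpOrd F ar} {sel : SelFun F ar O} {Sω : Set (PClause F ar)}

theorem interp_eq (l : Trm F ar) :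
    Interp O sel Sω l =
      letI := Classical.propDecidable
      if h : NormalForm (IPre O sel Sω l) l ∧
          ∃ rr, ProducesWith O sel Sω (IPre O sel Sω l) l rr then
        IPre O sel Sω l ∪ {(l, h.2.choose)}
      else IPre O sel Sω l := by
  rw [Interp, WellFounded.fix_eq]
  rfl

theorem iPre_subset_interp (l : Trm F ar) : IPre O sel Sω l ⊆ Interp O sel Sω l := by
  rw [interp_eq]
  split_ifs
  exacts [Set.subset_union_left, subset_rfl]

theorem fst_eq_of_mem_interp_of_notMem_iPre {l : Trm F ar} {lr : Trm F ar × Trm F ar}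
    (h : lr ∈ Interp O sel Sω l) (hpre : lr ∉ IPre O sel Sω l) : lr.1 = l := by
  rw [interp_eq] at h
  split_ifs at h
  · rcases h with h | rfl
    exacts [absurd h hpre, rfl]
  · exact absurd h hpre

theorem mem_iPre_iff {l : Trm F ar} {lr : Trm F ar × Trm F ar} :
    lr ∈ IPre O sel Sω l ↔ ∃ r, O.gt l r ∧ lr ∈ Interp O sel Sω r := by
  simp [IPre]

theorem interp_mono {u v : Trm F ar} (h : O.gt u v) :
    Interp O sel Sω v ⊆ Interp O sel Sω u :=
  fun _ hlr => iPre_subset_interp u (mem_iPre_iff.2 ⟨v, h, hlr⟩)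

theorem mem_interp_fst_of_mem_interp (u : Trm F ar) {lr : Trm F ar × Trm F ar}
    (h : lr ∈ Interp O sel Sω u) : lr ∈ Interp O sel Sω lr.1 ∧ (lr.1 = u ∨ O.gt u lr.1) := by
  induction u using O.wf.induction with
  | _ u ih =>
    by_cases hpre : lr ∈ IPre O sel Sω u
    · obtain ⟨v, huv, hv⟩ := mem_iPre_iff.1 hpre
      obtain ⟨hmem, hle⟩ := ih v huv hv
      refine ⟨hmem, Or.inr ?_⟩
      rcases hle with hle | hle
      exacts [hle ▸ huv, O.trans huv hle]
    · have hfst := fst_eq_of_mem_interp_of_notMem_iPre h hpre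
      exact ⟨hfst ▸ h, Or.inl hfst⟩

theorem normalForm_iOmega_of_normalForm_interp {t : Trm F ar}
    (h : NormalForm (Interp O sel Sω t) t) : NormalForm (IOmega O sel Sω) t := by
  rintro u ⟨lr, hlr, p, hpos, heq⟩
  obtain ⟨l, hl⟩ := Set.mem_iUnion.1 hlr
  have hself := (mem_interp_fst_of_mem_interp l hl).1
  have hmem : lr ∈ Interp O sel Sω t := by
    by_cases hlt : t = lr.1
    · exact hlt ▸ hself
    · exact interp_mono (O.subterm p hpos hlt) hself
  exact h u ⟨lr, hmem, p, hpos, heq⟩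

end Interp

theorem irreducible_iff_general {F : Type} {ar : F → ℕ}
    (O : SimpOrd F ar) (sel : SelFun F ar O) (𝕊 : Saturation O sel)
    (s t : Trm F ar) (hst : O.gt s t) :
    (NormalForm (Interp O sel 𝕊.Somega t) t ↔ NormalForm (Interp O sel 𝕊.Somega s) t) ∧
      (NormalForm (Interp O sel 𝕊.Somega t) t ↔ NormalForm (IOmega O sel 𝕊.Somega) t) := by
  have omega_to_s : NormalForm (IOmega O sel 𝕊.Somega) t →
      NormalForm (Interp O sel 𝕊.Somega s) t :=
    NormalForm.anti (Set.subset_iUnion _ s)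
  have s_to_t : NormalForm (Interp O sel 𝕊.Somega s) t →
      NormalForm (Interp O sel 𝕊.Somega t) t :=
    NormalForm.anti (interp_mono hst)
  have t_to_omega : NormalForm (Interp O sel 𝕊.Somega t) t →
      NormalForm (IOmega O sel 𝕊.Somega) t :=
    normalForm_iOmega_of_normalForm_interp
  exact ⟨⟨fun h => omega_to_s (t_to_omega h), s_to_t⟩,
    ⟨t_to_omega, fun h => s_to_t (omega_to_s h)⟩⟩

/-- For ground terms `s ≻ t`, the following are equivalent:
`t` is irreducible in `I_t`; `t` is irreducible in `I_s`; `t` is irreducible in `I_ω`. -/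
theorem irreducible_iff {F : Type} {ar : F → ℕ} (hF : Finite F) (hconst : ∃ c : F, ar c = 0)
    (O : SimpOrd F ar) (sel : SelFun F ar O) (𝕊 : Saturation O sel)
    (s t : Trm F ar) (hs : s.IsGround) (ht : t.IsGround) (hst : O.gt s t) :
    (NormalForm (Interp O sel 𝕊.Somega t) t ↔ NormalForm (Interp O sel 𝕊.Somega s) t) ∧
      (NormalForm (Interp O sel 𝕊.Somega t) t ↔ NormalForm (IOmega O sel 𝕊.Somega) t) :=
  irreducible_iff_general O sel 𝕊 s t hst

end PaRC
end

section
/- Let S₀, S₁, … be a saturation with respect to the PaRC calculus and I_ω the rewrite system of the model construction. Suppose C is a ground clause with C ∈ S_i* and I_ω ⊭ C. Then there exists a persistent ground clause D such that C ⪰ D and I_ω ⊭ D. -/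
set_option autoImplicit false

namespace PaRC

variable {F : Type} {ar : F → ℕ}

variable {O : SimpOrd F ar} {sel : SelFun F ar O}

/-!
Induction on `C` along the well-founded bag extension of `≻`. If `C` is not persistent, it
drops out of `⌊S_j⌋` for some `j ≥ i`; this only happens when a redundancy step cuts it out,
so `C` is entailed by smaller clauses of `S_j*`. The rules of `I_ω` decrease in `≻`, and no
left-hand side contains another one (each is irreducible by the rules produced before it), so
`I_ω` is terminating and confluent, and its normal forms form a Σ-algebra satisfying exactly
the ground clauses true in `I_ω`. Hence one of the smaller clauses is false in `I_ω`, and the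
induction hypothesis applies.
-/

section MultisetOrder

variable {α : Type} {r : α → α → Prop}

theorem multGT_iff_isDershowitzMannaLT [IsStrictOrder α r] {M N : Multiset α} :
    MultGT r N M ↔
      @Multiset.IsDershowitzMannaLT α (partialOrderOfSO (Function.swap r)).toPreorder M N := by
  constructor
  · rintro ⟨X, Y, Z, hX, rfl, rfl, hY⟩
    exact ⟨Z, Y, X, hX, rfl, rfl, hY⟩
  · rintro ⟨Z, Y, X, hX, rfl, rfl, hY⟩
    exact ⟨X, Y, Z, hX, rfl, rfl, hY⟩

theorem MultGT.trans [IsStrictOrder α r] {M N P : Multiset α}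
    (hMN : MultGT r M N) (hNP : MultGT r N P) : MultGT r M P := by
  let _ := partialOrderOfSO (Function.swap r)
  rw [multGT_iff_isDershowitzMannaLT] at *
  exact hNP.trans hMN

theorem wellFounded_multGT [IsStrictOrder α r] (hr : WellFounded (Function.swap r)) :
    WellFounded (fun M N : Multiset α => MultGT r N M) := by
  let _ := partialOrderOfSO (Function.swap r)
  have : WellFoundedLT α := ⟨hr⟩
  simpa only [multGT_iff_isDershowitzMannaLT] using Multiset.wellFounded_isDershowitzMannaLT

end MultisetOrder

instance SimpOrd.isStrictOrder (O : SimpOrd F ar) : IsStrictOrder (Trm F ar) O.gt where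
  irrefl := O.irrefl
  trans _ _ _ := O.trans

instance litGT.isStrictOrder (O : SimpOrd F ar) : IsStrictOrder (Lit F ar) (litGT O) where
  irrefl L := (InvImage.wf Lit.ms (wellFounded_multGT O.wf)).irrefl.irrefl L
  trans _ _ _ := MultGT.trans

theorem clauseGT_wellFounded (O : SimpOrd F ar) :
    WellFounded (Function.swap (clauseGT O)) :=
  wellFounded_multGT (InvImage.wf Lit.ms (wellFounded_multGT O.wf))

theorem clauseGT.trans {O : SimpOrd F ar} {C D E : Clause F ar}
    (hCD : clauseGT O C D) (hDE : clauseGT O D E) : clauseGT O C E :=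
  MultGT.trans hCD hDE

theorem clauseGT.trans_clauseGE {O : SimpOrd F ar} {C D E : Clause F ar}
    (hCD : clauseGT O C D) (hDE : clauseGE O D E) : clauseGT O C E := by
  rcases hDE with hDE | rfl
  exacts [hCD.trans hDE, hCD]

def Trm.size : Trm F ar → ℕ
  | .var _ => 1
  | .app _ a => 1 + ∑ i, (a i).size

theorem Trm.atPos_app_cons {f : F} {a : Fin (ar f) → Trm F ar} {i : ℕ} {p : List ℕ}
    {u : Trm F ar} (h : Trm.atPos (.app f a) (i :: p) = some u) :
    ∃ k : Fin (ar f), (k : ℕ) = i ∧ Trm.atPos (a k) p = some u ∧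
      ∀ v, Trm.replace (.app f a) (i :: p) v =
        .app f (Function.update a k (Trm.replace (a k) p v)) := by
  simp only [Trm.atPos] at h
  split_ifs at h with hi
  exact ⟨⟨i, hi⟩, rfl, h, fun v => by simp [Trm.replace, hi]⟩

theorem Trm.size_arg_lt {f : F} (a : Fin (ar f) → Trm F ar) (k : Fin (ar f)) :
    (a k).size < (Trm.app f a).size := by
  have := Finset.single_le_sum (f := fun i => (a i).size) (fun _ _ => Nat.zero_le _)
    (Finset.mem_univ k)
  simp only [Trm.size]
  omega

theorem Trm.size_le_of_atPos {s t : Trm F ar} {p : List ℕ} (h : Trm.atPos s p = some t) :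
    t.size ≤ s.size := by
  induction p generalizing s with
  | nil => simp only [Trm.atPos, Option.some.injEq] at h; rw [h]
  | cons i p ih =>
    cases s with
    | var x => simp [Trm.atPos] at h
    | app f a =>
      obtain ⟨k, -, hk, -⟩ := Trm.atPos_app_cons h
      exact (ih hk).trans (Trm.size_arg_lt a k).le

theorem Trm.size_lt_of_atPos_cons {s t : Trm F ar} {i : ℕ} {p : List ℕ}
    (h : Trm.atPos s (i :: p) = some t) : t.size < s.size := by
  cases s with
  | var x => simp [Trm.atPos] at h
  | app f a =>
    obtain ⟨k, -, hk, -⟩ := Trm.atPos_app_cons h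
    exact (Trm.size_le_of_atPos hk).trans_lt (Trm.size_arg_lt a k)

theorem Trm.eq_nil_of_atPos_self {s : Trm F ar} {p : List ℕ} (h : Trm.atPos s p = some s) :
    p = [] := by
  cases p with
  | nil => rfl
  | cons i p => exact absurd (Trm.size_lt_of_atPos_cons h) (lt_irrefl _)

theorem Trm.replace_atPos_self {s u : Trm F ar} {p : List ℕ} (h : Trm.atPos s p = some u) :
    Trm.replace s p u = s := by
  induction p generalizing s with
  | nil => simpa [Trm.atPos, Trm.replace, eq_comm] using h
  | cons i p ih =>
    cases s with
    | var x => simp [Trm.atPos] at h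
    | app f a =>
      obtain ⟨k, rfl, hk, hrep⟩ := Trm.atPos_app_cons h
      rw [hrep, ih hk, Function.update_eq_self]

theorem Trm.exists_isGround (h : ∃ c : F, ar c = 0) : ∃ t : Trm F ar, t.IsGround :=
  let ⟨c, hc⟩ := h
  ⟨.app c fun k => (Fin.cast hc k).elim0, fun k => (Fin.cast hc k).elim0⟩

theorem Trm.subst_congr {σ σ' : Subst F ar} {t : Trm F ar}
    (h : ∀ x ∈ t.fvars, σ x = σ' x) : t.subst σ = t.subst σ' := by
  induction t with
  | var y => exact h y rfl
  | app f a ih =>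
    simp only [Trm.subst]
    congr 1
    funext k
    exact ih k fun x hx => h x (Set.mem_iUnion.mpr ⟨k, hx⟩)

theorem Trm.exists_of_mem_fvars_subst {σ : Subst F ar} {t : Trm F ar} {x : ℕ}
    (hx : x ∈ (t.subst σ).fvars) : ∃ y ∈ t.fvars, x ∈ (σ y).fvars := by
  induction t with
  | var y => exact ⟨y, rfl, hx⟩
  | app f a ih =>
    obtain ⟨k, hk⟩ := Set.mem_iUnion.mp hx
    obtain ⟨y, hy, hxy⟩ := ih k hk
    exact ⟨y, Set.mem_iUnion.mpr ⟨k, hy⟩, hxy⟩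

theorem Trm.fvars_eq_empty {t : Trm F ar} (ht : t.IsGround) : t.fvars = ∅ := by
  induction t with
  | var x => exact ht.elim
  | app f a ih => exact Set.iUnion_eq_empty.mpr fun k => ih k (ht k)

theorem Trm.isGround_of_isGround_subst {σ : Subst F ar} {t : Trm F ar}
    (h : (t.subst σ).IsGround) {x : ℕ} (hx : x ∈ t.fvars) : (σ x).IsGround := by
  induction t with
  | var y => obtain rfl : x = y := hx; exact h
  | app f a ih =>
    obtain ⟨k, hk⟩ := Set.mem_iUnion.mp hx
    exact ih k (h k) hk

theorem GroundingFor.isGround {θ : Subst F ar} {C : Clause F ar} (h : GroundingFor θ C)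
    {x : ℕ} (hx : x ∈ C.fvars) : (θ x).IsGround := by
  obtain ⟨L, hL, hxL⟩ := hx
  have hg := h _ (Multiset.mem_map_of_mem _ hL)
  rcases hxL with hxL | hxL
  · exact Trm.isGround_of_isGround_subst hg.1 hxL
  · exact Trm.isGround_of_isGround_subst hg.2 hxL

section Rewriting

variable {I : Set (Trm F ar × Trm F ar)}

theorem Rw.app {f : F} {a : Fin (ar f) → Trm F ar} {k : Fin (ar f)} {v : Trm F ar}
    (h : Rw I (a k) v) : Rw I (.app f a) (.app f (Function.update a k v)) := by
  obtain ⟨lr, hlr, p, hp, rfl⟩ := h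
  exact ⟨lr, hlr, k :: p, by simpa [Trm.atPos] using hp, by simp [Trm.replace]⟩

theorem RwStar.app {f : F} {a : Fin (ar f) → Trm F ar} {k : Fin (ar f)} {v : Trm F ar}
    (h : RwStar I (a k) v) : RwStar I (.app f a) (.app f (Function.update a k v)) := by
  induction h with
  | refl => rw [Function.update_eq_self]; exact .refl
  | tail _ hvw ih =>
    refine ih.tail ?_
    simpa only [Function.update_idem, Function.update_self] using
      Rw.app (a := Function.update a k _) (k := k) (by rwa [Function.update_self])

theorem RwStar.app_of_forall {f : F} {a b : Fin (ar f) → Trm F ar}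
    (h : ∀ k, RwStar I (a k) (b k)) : RwStar I (.app f a) (.app f b) := by
  classical
  suffices ∀ s : Finset (Fin (ar f)), RwStar I (.app f a) (.app f (s.piecewise b a)) by
    simpa using this Finset.univ
  intro s
  induction s using Finset.induction_on with
  | empty => simp only [Finset.piecewise_empty]; exact .refl
  | insert k s hk ih =>
    rw [Finset.piecewise_insert]
    exact ih.trans (RwStar.app (by simpa [hk] using h k))

theorem Rw.gt (O : SimpOrd F ar) (hI : ∀ lr ∈ I, O.gt lr.1 lr.2) {s t : Trm F ar}
    (h : Rw I s t) : O.gt s t := by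
  obtain ⟨lr, hlr, p, hp, rfl⟩ := h
  simpa only [Trm.replace_atPos_self hp] using O.ctxStable s p (by simp [hp]) (hI lr hlr)

theorem terminating_of_decreasing (O : SimpOrd F ar) (hI : ∀ lr ∈ I, O.gt lr.1 lr.2) :
    Terminating I :=
  Subrelation.wf (Rw.gt O hI) O.wf

theorem NonOverlapping.eq_of_atPos (hI : NonOverlapping I) {lr lr' : Trm F ar × Trm F ar}
    (hlr : lr ∈ I) (hlr' : lr' ∈ I) {p : List ℕ} (h : Trm.atPos lr.1 p = some lr'.1) :
    lr = lr' ∧ p = [] := by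
  obtain rfl : lr = lr' := by_contra fun hne => hI lr hlr lr' hlr' hne p h
  exact ⟨rfl, Trm.eq_nil_of_atPos_self h⟩

theorem NonOverlapping.rw_joinable (hI : NonOverlapping I) {s t₁ t₂ : Trm F ar}
    (h₁ : Rw I s t₁) (h₂ : Rw I s t₂) : t₁ = t₂ ∨ ∃ d, Rw I t₁ d ∧ Rw I t₂ d := by
  obtain ⟨lr₁, hlr₁, p, hp, rfl⟩ := h₁
  obtain ⟨lr₂, hlr₂, q, hq, rfl⟩ := h₂
  induction p generalizing s q with
  | nil =>
    obtain rfl : s = lr₁.1 := by simpa [Trm.atPos] using hp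
    obtain ⟨rfl, rfl⟩ := hI.eq_of_atPos hlr₁ hlr₂ hq
    exact Or.inl rfl
  | cons i p ih =>
    cases q with
    | nil =>
      obtain rfl : s = lr₂.1 := by simpa [Trm.atPos] using hq
      exact absurd (hI.eq_of_atPos hlr₂ hlr₁ hp).2 (List.cons_ne_nil i p)
    | cons j q =>
      cases s with
      | var x => simp [Trm.atPos] at hp
      | app f a =>
        obtain ⟨k, rfl, hp, hrp⟩ := Trm.atPos_app_cons hp
        obtain ⟨m, rfl, hq, hrq⟩ := Trm.atPos_app_cons hq
        rw [hrp, hrq]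
        by_cases hkm : k = m
        · subst hkm
          rcases ih hp q hq with h | ⟨d, hd₁, hd₂⟩
          · exact Or.inl (by rw [h])
          · right
            refine ⟨.app f (Function.update a k d), ?_, ?_⟩
            · simpa using Rw.app (a := Function.update a k _) (k := k) (by simpa using hd₁)
            · simpa using Rw.app (a := Function.update a k _) (k := k) (by simpa using hd₂)
        · right
          have hstep₁ : Rw I (a k) (Trm.replace (a k) p lr₁.2) := ⟨lr₁, hlr₁, p, hp, rfl⟩
          have hstep₂ : Rw I (a m) (Trm.replace (a m) q lr₂.2) := ⟨lr₂, hlr₂, q, hq, rfl⟩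
          refine ⟨.app f (Function.update (Function.update a k (Trm.replace (a k) p lr₁.2)) m
            (Trm.replace (a m) q lr₂.2)), ?_, ?_⟩
          · exact Rw.app (by rwa [Function.update_of_ne (Ne.symm hkm)])
          · rw [Function.update_comm hkm]
            exact Rw.app (by rwa [Function.update_of_ne hkm])

theorem NonOverlapping.confluent (hI : NonOverlapping I) : Confluent I := by
  intro a b c hab hac
  refine Relation.church_rosser (fun a b c hab hac => ?_) hab hac
  rcases hI.rw_joinable hab hac with rfl | ⟨d, hbd, hcd⟩
  · exact ⟨b, .refl, .refl⟩
  · exact ⟨d, .single hbd, .single hcd⟩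

end Rewriting

section NormalForms

variable {I : Set (Trm F ar × Trm F ar)}

theorem Terminating.exists_normalForm (hT : Terminating I) (s : Trm F ar) :
    ∃ u, RwStar I s u ∧ NormalForm I u := by
  induction s using hT.induction with
  | _ s ih =>
    by_cases hs : NormalForm I s
    · exact ⟨s, .refl, hs⟩
    · obtain ⟨t, hst⟩ := not_forall_not.mp hs
      obtain ⟨u, htu, hu⟩ := ih t hst
      exact ⟨u, .head hst htu, hu⟩

theorem NormalForm.eq_of_rwStar {u v : Trm F ar} (hu : NormalForm I u) (h : RwStar I u v) :
    u = v := by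
  cases h.cases_head with
  | inl h => exact h
  | inr h => obtain ⟨w, huw, -⟩ := h; exact absurd huw (hu w)

theorem Confluent.normalForm_unique (hC : Confluent I) {s u v : Trm F ar}
    (hsu : RwStar I s u) (hsv : RwStar I s v) (hu : NormalForm I u) (hv : NormalForm I v) :
    u = v := by
  obtain ⟨w, huw, hvw⟩ := hC s u v hsu hsv
  rw [hu.eq_of_rwStar huw, hv.eq_of_rwStar hvw]

theorem sameNF_equivalence (hT : Terminating I) (hC : Confluent I) :
    Equivalence (SameNF I) where
  refl s := by
    obtain ⟨u, hsu, hu⟩ := hT.exists_normalForm s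
    exact ⟨u, hsu, hsu, hu⟩
  symm := fun ⟨u, hsu, htu, hu⟩ => ⟨u, htu, hsu, hu⟩
  trans := fun ⟨u, hsu, htu, hu⟩ ⟨v, htv, hwv, hv⟩ => by
    obtain rfl := hC.normalForm_unique htu htv hu hv
    exact ⟨u, hsu, hwv, hu⟩

theorem SameNF.app (hT : Terminating I) {f : F} {a b : Fin (ar f) → Trm F ar}
    (h : ∀ k, SameNF I (a k) (b k)) : SameNF I (.app f a) (.app f b) := by
  choose u hau hbu _ using h
  obtain ⟨w, huw, hw⟩ := hT.exists_normalForm (.app f u)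
  exact ⟨w, (RwStar.app_of_forall hau).trans huw, (RwStar.app_of_forall hbu).trans huw, hw⟩

end NormalForms

section TermModel

variable (I : Set (Trm F ar × Trm F ar)) (hT : Terminating I) (hC : Confluent I)

def sameNFSetoid : Setoid (Trm F ar) := ⟨SameNF I, sameNF_equivalence hT hC⟩

noncomputable def rwAlg : Alg F ar where
  carrier := Quotient (sameNFSetoid I hT hC)
  nonempty := ⟨Quotient.mk _ (.var 0)⟩
  interp f v := Quotient.mk _ (.app f fun k => (v k).out)

variable {I hT hC}

theorem rwAlg_eval_of_isGround (v : ℕ → (rwAlg I hT hC).carrier) {t : Trm F ar}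
    (ht : t.IsGround) : t.eval (rwAlg I hT hC) v = Quotient.mk (sameNFSetoid I hT hC) t := by
  induction t with
  | var x => exact ht.elim
  | app f a ih =>
    exact Quotient.sound <| SameNF.app hT fun k =>
      Quotient.exact ((Quotient.out_eq (s := sameNFSetoid I hT hC) _).trans (ih k (ht k)))

theorem validIn_rwAlg_iff {D : Clause F ar} (hD : D.IsGround) :
    D.validIn (rwAlg I hT hC) ↔ TrueIn I D := by
  have hlit : ∀ v, ∀ L ∈ D, L.holds (rwAlg I hT hC) v ↔
      if L.pos then SameNF I L.lhs L.rhs else ¬ SameNF I L.lhs L.rhs := by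
    intro v L hL
    rw [Lit.holds, rwAlg_eval_of_isGround v (hD L hL).1, rwAlg_eval_of_isGround v (hD L hL).2]
    split_ifs
    · exact Quotient.eq
    · exact not_congr Quotient.eq
  constructor
  · intro h
    obtain ⟨L, hL, hholds⟩ := h fun _ => Quotient.mk _ (.var 0)
    exact ⟨L, hL, (hlit _ L hL).mp hholds⟩
  · rintro ⟨L, hL, htrue⟩ v
    exact ⟨L, hL, (hlit v L hL).mpr htrue⟩

end TermModel

theorem TrueIn.of_entails {I : Set (Trm F ar × Trm F ar)} (hT : Terminating I) (hC : Confluent I)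
    {Cs : Set (Clause F ar)} {D : Clause F ar}
    (hCs : ∀ C ∈ Cs, C.IsGround) (hD : D.IsGround) (hent : Entails Cs D)
    (htrue : ∀ C ∈ Cs, TrueIn I C) : TrueIn I D :=
  (validIn_rwAlg_iff (hT := hT) (hC := hC) hD).mp <|
    hent _ fun C hC => (validIn_rwAlg_iff (hCs C hC)).mpr (htrue C hC)

theorem ProducesWith.gt {Sω : Set (PClause F ar)} {I : Set (Trm F ar × Trm F ar)}
    {l rr : Trm F ar} (h : ProducesWith O sel Sω I l rr) : O.gt l rr := by
  obtain ⟨l₁, r₁, -, -, -, θ, -, -, -, rfl, hgt, -, -, -, rfl⟩ := h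
  exact hgt

section ModelConstruction

variable (O : SimpOrd F ar) (sel : SelFun F ar O) (Sω : Set (PClause F ar))

/-- The rule `l → r` added at stage `l` of the model construction; empty if `l` produces
nothing. -/
def producedRule (l : Trm F ar) : Set (Trm F ar × Trm F ar) :=
  {lr | ∃ h : NormalForm (IPre O sel Sω l) l ∧
      ∃ rr, ProducesWith O sel Sω (IPre O sel Sω l) l rr, lr = (l, h.2.choose)}

theorem Interp_eq (l : Trm F ar) :
    Interp O sel Sω l = IPre O sel Sω l ∪ producedRule O sel Sω l := by
  change WellFounded.fix _ _ l = _
  rw [WellFounded.fix_eq]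
  change (letI := Classical.propDecidable; if h : NormalForm (IPre O sel Sω l) l ∧
      ∃ rr, ProducesWith O sel Sω (IPre O sel Sω l) l rr then
    IPre O sel Sω l ∪ {(l, h.2.choose)} else IPre O sel Sω l) = _
  split_ifs with h
  · congr 1
    ext lr
    exact ⟨fun e => ⟨h, e⟩, fun ⟨_, e⟩ => e⟩
  · rw [Set.eq_empty_of_forall_notMem (s := producedRule O sel Sω l) fun _ ⟨h', _⟩ => h h',
      Set.union_empty]

theorem producedRule_subset_IPre {l l' : Trm F ar} (h : O.gt l l') :
    producedRule O sel Sω l' ⊆ IPre O sel Sω l := fun _ hlr =>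
  Set.mem_iUnion₂.mpr ⟨l', h, by rw [Interp_eq]; exact Or.inr hlr⟩

theorem mem_producedRule_of_mem_IOmega {lr : Trm F ar × Trm F ar}
    (h : lr ∈ IOmega O sel Sω) : lr ∈ producedRule O sel Sω lr.1 := by
  obtain ⟨m, hm⟩ := Set.mem_iUnion.mp h
  induction m using O.wf.induction with
  | _ m ih =>
    rw [Interp_eq] at hm
    rcases hm with hm | hm
    · obtain ⟨r, hmr, hr⟩ := Set.mem_iUnion₂.mp hm
      exact ih r hmr hr
    · obtain ⟨hprod, rfl⟩ := hm
      exact ⟨hprod, rfl⟩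

theorem producedRule_subsingleton (l : Trm F ar) : (producedRule O sel Sω l).Subsingleton :=
  fun _ ⟨_, h₁⟩ _ ⟨_, h₂⟩ => h₁.trans h₂.symm

theorem IOmega_decreasing : ∀ lr ∈ IOmega O sel Sω, O.gt lr.1 lr.2 := by
  intro lr hlr
  obtain ⟨h, hlr⟩ := mem_producedRule_of_mem_IOmega O sel Sω hlr
  rw [hlr]
  exact h.2.choose_spec.gt

theorem IOmega_nonOverlapping : NonOverlapping (IOmega O sel Sω) := by
  intro lr hlr lr' hlr' hne p hp
  have hmem := mem_producedRule_of_mem_IOmega O sel Sω hlr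
  have hmem' := mem_producedRule_of_mem_IOmega O sel Sω hlr'
  by_cases heq : lr.1 = lr'.1
  · rw [← heq] at hmem'
    exact hne (producedRule_subsingleton O sel Sω lr.1 hmem hmem')
  · -- `lr'.1` is a proper subterm of `lr.1`, so `lr'` would already reduce `lr.1` in `I_{≺ lr.1}`
    obtain ⟨⟨hnf, -⟩, -⟩ := hmem
    exact hnf _ ⟨lr', producedRule_subset_IPre O sel Sω (O.subterm p hp heq) hmem', p, hp, rfl⟩

theorem IOmega_terminating : Terminating (IOmega O sel Sω) :=
  terminating_of_decreasing O (IOmega_decreasing O sel Sω)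

theorem IOmega_confluent : Confluent (IOmega O sel Sω) :=
  (IOmega_nonOverlapping O sel Sω).confluent

end ModelConstruction

theorem RForm.realize_congr {v v' : Subst F ar} {R : RForm F ar}
    (h : ∀ x ∈ R.fvars, v x = v' x) : R.realize O v ↔ R.realize O v' := by
  induction R generalizing v v' with
  | falsum | verum => rfl
  | eq s t | gt s t =>
    simp only [RForm.realize]
    rw [Trm.subst_congr fun x hx => h x (Or.inl hx), Trm.subst_congr fun x hx => h x (Or.inr hx)]
  | and a b iha ihb | or a b iha ihb =>
    simp only [RForm.realize]
    rw [iha fun x hx => h x (Or.inl hx), ihb fun x hx => h x (Or.inr hx)]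
  | ex x a ih =>
    refine exists_congr fun g => and_congr_right fun _ => ih fun y hy => ?_
    by_cases hyx : y = x
    · simp [hyx]
    · simp only [Function.update_of_ne hyx]
      exact h y ⟨hy, hyx⟩

theorem RForm.exists_of_mem_fvars_subst {σ : Subst F ar} {R : RForm F ar} {x : ℕ}
    (hx : x ∈ (R.subst σ).fvars) : ∃ y ∈ R.fvars, x ∈ (σ y).fvars := by
  induction R generalizing σ with
  | falsum | verum => exact hx.elim
  | eq s t | gt s t =>
    rcases hx with hx | hx
    · obtain ⟨y, hy, hxy⟩ := Trm.exists_of_mem_fvars_subst hx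
      exact ⟨y, Or.inl hy, hxy⟩
    · obtain ⟨y, hy, hxy⟩ := Trm.exists_of_mem_fvars_subst hx
      exact ⟨y, Or.inr hy, hxy⟩
  | and a b iha ihb | or a b iha ihb =>
    rcases hx with hx | hx
    · obtain ⟨y, hy, hxy⟩ := iha hx
      exact ⟨y, Or.inl hy, hxy⟩
    · obtain ⟨y, hy, hxy⟩ := ihb hx
      exact ⟨y, Or.inr hy, hxy⟩
  | ex z a ih =>
    obtain ⟨hx, hxz⟩ := hx
    obtain ⟨y, hy, hxy⟩ := ih hx
    by_cases hyz : y = z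
    · simp [hyz] at hxy
      exact absurd hxy hxz
    · simp only [if_neg hyz] at hxy
      exact ⟨y, ⟨hy, hyz⟩, hxy⟩

theorem RForm.realize_subst_iff_of_isGround {θ : Subst F ar} {R : RForm F ar}
    (hθ : ∀ x ∈ R.fvars, (θ x).IsGround) (v v' : Subst F ar) :
    (R.subst θ).realize O v ↔ (R.subst θ).realize O v' :=
  RForm.realize_congr fun x hx => by
    obtain ⟨y, hy, hxy⟩ := RForm.exists_of_mem_fvars_subst hx
    rw [Trm.fvars_eq_empty (hθ y hy)] at hxy
    exact hxy.elim

theorem not_rSat_falsum (hg : ∃ t : Trm F ar, t.IsGround) (θ : Subst F ar) :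
    ¬ RSat O θ .falsum := fun h =>
  let ⟨t, ht⟩ := hg
  h (fun _ => t) (fun _ => ht)

/-- Once `θ` grounds its free variables, the truth of `(R₁ ∨ R₂)θ` no longer depends on the
valuation, so the disjunction can be split. -/
theorem RSat.of_or (hg : ∃ t : Trm F ar, t.IsGround) {θ : Subst F ar} {R₁ R₂ : RForm F ar}
    (hθ : ∀ x ∈ (R₁.or R₂).fvars, (θ x).IsGround) (h : RSat O θ (R₁.or R₂)) :
    RSat O θ R₁ ∨ RSat O θ R₂ := by
  obtain ⟨t, ht⟩ := hg
  rcases h (fun _ => t) (fun _ => ht) with h₁ | h₂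
  · exact Or.inl fun v _ =>
      (RForm.realize_subst_iff_of_isGround (fun x hx => hθ x (Or.inl hx)) _ _).mp h₁
  · exact Or.inr fun v _ =>
      (RForm.realize_subst_iff_of_isGround (fun x hx => hθ x (Or.inr hx)) _ _).mp h₂

theorem Redundant.mono {S S' : Set (Clause F ar)} (hS : S ⊆ S') {D : Clause F ar}
    (h : Redundant O S D) : Redundant O S' D :=
  let ⟨Cs, hCs, hent, hlt⟩ := h
  ⟨Cs, fun C hC => hS (hCs C hC), hent, hlt⟩

theorem isGround_of_mem_gstar {S : Set (PClause F ar)} {D : Clause F ar} (h : D ∈ gstar S) :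
    D.IsGround :=
  let ⟨_, _, _, _, hD⟩ := h
  hD

namespace Saturation

variable (𝕊 : Saturation O sel)

theorem gstar_subset_succ (i : ℕ) : gstar (𝕊.S i) ⊆ gstar (𝕊.S (i + 1)) := by
  rintro D ⟨pc, hpc, θ, rfl, hD⟩
  rcases 𝕊.step i with ⟨_, _, _, -, -, hS⟩ | ⟨pc₀, _, R₂, hfv, _, hS⟩
  · exact ⟨pc, hS ▸ Or.inl hpc, θ, rfl, hD⟩
  · by_cases hpc₀ : pc = pc₀
    · subst hpc₀
      exact ⟨⟨pc.cl, .or pc.rf R₂, hfv⟩, hS ▸ Or.inr rfl, θ, rfl, hD⟩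
    · exact ⟨pc, hS ▸ Or.inl ⟨hpc, hpc₀⟩, θ, rfl, hD⟩

theorem gstar_mono {i j : ℕ} (hij : i ≤ j) : gstar (𝕊.S i) ⊆ gstar (𝕊.S j) := by
  induction j, hij using Nat.le_induction with
  | base => exact le_rfl
  | succ j _ ih => exact ih.trans (𝕊.gstar_subset_succ j)

theorem redundant_of_rSat (hg : ∃ t : Trm F ar, t.IsGround) (i : ℕ) :
    ∀ pc ∈ 𝕊.S i, ∀ θ : Subst F ar, GroundingFor θ pc.cl → RSat O θ pc.rf →
      Redundant O (gstar (𝕊.S i)) (pc.cl.subst θ) := by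
  induction i with
  | zero =>
    intro pc hpc θ _ hsat
    rw [𝕊.init pc hpc] at hsat
    exact absurd hsat (not_rSat_falsum hg θ)
  | succ i ih =>
    intro pc hpc θ hθ hsat
    refine Redundant.mono (𝕊.gstar_subset_succ i) ?_
    rcases 𝕊.step i with ⟨_, _, _, -, -, hS⟩ | ⟨pc₀, hpc₀, R₂, hfv, hred, hS⟩
    · rcases hS ▸ hpc with hpc | rfl
      · exact ih pc hpc θ hθ hsat
      · exact absurd hsat (not_rSat_falsum hg θ)
    · rcases hS ▸ hpc with ⟨hpc, -⟩ | rfl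
      · exact ih pc hpc θ hθ hsat
      · rcases RSat.of_or hg (fun x hx => hθ.isGround (hfv hx)) hsat with h | h
        · exact ih pc₀ hpc₀ θ hθ h
        · exact hred θ hθ h

theorem exists_redundant_of_not_persistent (hg : ∃ t : Trm F ar, t.IsGround) {i : ℕ}
    {C : Clause F ar} (hC : C ∈ gstar (𝕊.S i)) (hpers : ¬ 𝕊.Persistent C) :
    ∃ j, Redundant O (gstar (𝕊.S j)) C := by
  obtain ⟨j, hij, hCj⟩ : ∃ j ≥ i, C ∉ gndS O (𝕊.S j) := by
    simp only [Saturation.Persistent, Saturation.limit, Set.mem_iUnion, Set.mem_iInter,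
      not_exists, not_forall, exists_prop] at hpers
    exact hpers i
  obtain ⟨pc, hpc, θ, rfl, hground⟩ := 𝕊.gstar_mono hij hC
  have hsat : RSat O θ pc.rf :=
    by_contra fun h => hCj (Set.mem_biUnion hpc ⟨θ, rfl, hground, h⟩)
  exact ⟨j, 𝕊.redundant_of_rSat hg j pc hpc θ hground hsat⟩

end Saturation

theorem false_persistent_below_general {F : Type} {ar : F → ℕ} (hconst : ∃ c : F, ar c = 0)
    (O : SimpOrd F ar) (sel : SelFun F ar O) (𝕊 : Saturation O sel)
    (i : ℕ) (C : Clause F ar) (hC : C ∈ gstar (𝕊.S i))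
    (hfalse : ¬ TrueIn (IOmega O sel 𝕊.Somega) C) :
    ∃ D : Clause F ar, 𝕊.Persistent D ∧ clauseGE O C D ∧
      ¬ TrueIn (IOmega O sel 𝕊.Somega) D := by
  have hg := Trm.exists_isGround hconst
  induction C using (clauseGT_wellFounded O).induction generalizing i with
  | _ C ih =>
    by_cases hpers : 𝕊.Persistent C
    · exact ⟨C, hpers, Or.inr rfl, hfalse⟩
    obtain ⟨j, Cs, hCs, hent, hlt⟩ := 𝕊.exists_redundant_of_not_persistent hg hC hpers
    obtain ⟨C', hC', hfalse'⟩ : ∃ C' ∈ Cs, ¬ TrueIn (IOmega O sel 𝕊.Somega) C' := by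
      by_contra! htrue
      exact hfalse <| TrueIn.of_entails (IOmega_terminating O sel _) (IOmega_confluent O sel _)
        (fun C' hC' => isGround_of_mem_gstar (hCs C' hC')) (isGround_of_mem_gstar hC) hent htrue
    obtain ⟨D, hD, hC'D, hDfalse⟩ := ih C' (hlt C' hC') j (hCs C' hC') hfalse'
    exact ⟨D, hD, Or.inl ((hlt C' hC').trans_clauseGE hC'D), hDfalse⟩

/-- If a ground clause `C ∈ S i *` is false in `I_ω`, then there
exists a persistent ground clause `D` with `C ⪰ D` that is false in `I_ω`. -/
theorem false_persistent_below {F : Type} {ar : F → ℕ} (hF : Finite F) (hconst : ∃ c : F, ar c = 0)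
    (O : SimpOrd F ar) (sel : SelFun F ar O) (𝕊 : Saturation O sel)
    (i : ℕ) (C : Clause F ar) (hC : C ∈ gstar (𝕊.S i))
    (hfalse : ¬ TrueIn (IOmega O sel 𝕊.Somega) C) :
    ∃ D : Clause F ar, 𝕊.Persistent D ∧ clauseGE O C D ∧
      ¬ TrueIn (IOmega O sel 𝕊.Somega) D :=
  false_persistent_below_general hconst O sel 𝕊 i C hC hfalse

end PaRC
end

section
/- Let S₀, …, S_i be a saturation with respect to the PaRC calculus such that the step S_i applies a PaRC inference with premises l ≈ r ⋈ R₁ and C[l'] ⋈ R₂ and conclusion C[r]σ, where σ = mgu(l, l'). Let R be the redundancy formula ∃ȳ (l = l' ∧ l ≻ r ∧ C[l'] ≻ l), where ȳ contains all free variables occurring in l and r but not in C[l']. Then R is admissible for S_i and C[l'], i.e., for every substitution θ grounding for C[l'] with θ ⊨ R, the ground clause C[l']θ is redundant with respect to S_i*. -/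
set_option autoImplicit false

namespace PaRC

variable {F : Type} {ar : F → ℕ}

variable {O : SimpOrd F ar} {sel : SelFun F ar O}

/-! A witness for `∃ȳ (l = l' ∧ l ≻ r ∧ C[l'] ≻ l)` extends `θ` to a ground substitution
`η` that agrees with `θ` on `C[l']` and unifies `l` and `l'`, so `η = σμ` for some `μ`.
Then `C[l']θ = C[l']η` follows from the two smaller instances `(l ≈ r)η` and `C[r]σμ` of
clauses of `S_i`: rewriting `l'η = lη` to `rη` inside a clause preserves truth modulo
`lη ≈ rη`, the rewritten clause is smaller because `≻` is compatible with contexts, and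
`lη ≈ rη` is smaller because some side of `C[l']η` exceeds `lη ≻ rη`. -/

namespace Trm

@[simp] theorem atPos_nil (s : Trm F ar) : s.atPos [] = some s := by cases s <;> rfl

@[simp] theorem replace_nil (s b : Trm F ar) : s.replace [] b = b := by cases s <;> rfl

theorem subst_subst (σ τ : Subst F ar) :
    ∀ s : Trm F ar, (s.subst σ).subst τ = s.subst (Subst.comp σ τ)
  | .var _ => rfl
  | .app f a => congrArg (Trm.app f) (funext fun i => subst_subst σ τ (a i))

theorem subst_congr_s14 {σ τ : Subst F ar} :
    ∀ {s : Trm F ar}, (∀ x ∈ s.fvars, σ x = τ x) → s.subst σ = s.subst τ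
  | .var x, h => h x rfl
  | .app f _, h =>
    congrArg (Trm.app f) (funext fun i => subst_congr_s14 fun x hx =>
      h x (Set.mem_iUnion.2 ⟨i, hx⟩))

theorem IsGround.subst_eq {σ : Subst F ar} : ∀ {s : Trm F ar}, s.IsGround → s.subst σ = s
  | .var _, h => h.elim
  | .app f _, h => congrArg (Trm.app f) (funext fun i => (h i).subst_eq)

theorem isGround_subst {σ : Subst F ar} (hσ : ∀ x, (σ x).IsGround) :
    ∀ s : Trm F ar, (s.subst σ).IsGround
  | .var x => hσ x
  | .app _ a => fun i => isGround_subst hσ (a i)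

theorem isGround_apply_of_isGround_subst {σ : Subst F ar} :
    ∀ {s : Trm F ar}, (s.subst σ).IsGround → ∀ x ∈ s.fvars, (σ x).IsGround
  | .var _, h, _, rfl => h
  | .app _ a, h, x, hx => by
    obtain ⟨i, hi⟩ := Set.mem_iUnion.1 hx
    exact isGround_apply_of_isGround_subst (h i) x hi

theorem atPos_subst (σ : Subst F ar) :
    ∀ {p : List ℕ} {s a : Trm F ar}, s.atPos p = some a →
      (s.subst σ).atPos p = some (a.subst σ)
  | [], _, _, h => by simp_all
  | _ :: _, .var _, _, h => by cases h
  | i :: _, .app f _, _, h => by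
    by_cases hi : i < ar f
    · simp only [atPos, dif_pos hi, Trm.subst] at h ⊢
      exact atPos_subst σ h
    · simp [atPos, hi] at h

theorem subst_replace (σ : Subst F ar) :
    ∀ {p : List ℕ} {s a : Trm F ar} (b : Trm F ar), s.atPos p = some a →
      (s.replace p b).subst σ = (s.subst σ).replace p (b.subst σ)
  | [], _, _, _, _ => by simp
  | _ :: _, .var _, _, _, h => by cases h
  | i :: _, .app f args, _, b, h => by
    by_cases hi : i < ar f
    · simp only [atPos, dif_pos hi] at h
      simp only [replace, dif_pos hi, Trm.subst]
      refine congrArg (Trm.app f) (funext fun j => ?_)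
      rcases eq_or_ne j ⟨i, hi⟩ with rfl | hj
      · simp only [Function.update_self]
        exact subst_replace σ b h
      · simp only [Function.update_of_ne hj]
    · simp [atPos, hi] at h

theorem replace_self : ∀ {p : List ℕ} {s a : Trm F ar}, s.atPos p = some a → s.replace p a = s
  | [], _, _, h => by simp_all
  | _ :: _, .var _, _, h => by cases h
  | i :: _, .app f _, _, h => by
    by_cases hi : i < ar f
    · simp only [atPos, dif_pos hi] at h
      simp only [replace, dif_pos hi, replace_self h, Function.update_eq_self]
    · simp [atPos, hi] at h

theorem eval_replace (A : Alg F ar) (v : ℕ → A.carrier) :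
    ∀ {p : List ℕ} {s a : Trm F ar} (b : Trm F ar), s.atPos p = some a →
      b.eval A v = a.eval A v → (s.replace p b).eval A v = s.eval A v
  | [], _, _, _, h, he => by simp_all
  | _ :: _, .var _, _, _, h, _ => by cases h
  | i :: _, .app f args, _, b, h, he => by
    by_cases hi : i < ar f
    · simp only [atPos, dif_pos hi] at h
      simp only [replace, dif_pos hi, Trm.eval]
      refine congrArg (A.interp f) (funext fun j => ?_)
      rcases eq_or_ne j ⟨i, hi⟩ with rfl | hj
      · simp only [Function.update_self]
        exact eval_replace A v b h he
      · simp only [Function.update_of_ne hj]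
    · simp [atPos, hi] at h

end Trm

theorem SimpOrd.gt_replace (O : SimpOrd F ar) {s a b : Trm F ar} {p : List ℕ}
    (hp : s.atPos p = some a) (hab : O.gt a b) : O.gt s (s.replace p b) := by
  simpa only [Trm.replace_self hp] using O.ctxStable s p (by simp [hp]) hab

theorem Lit.subst_subst (σ τ : Subst F ar) (L : Lit F ar) :
    (L.subst σ).subst τ = L.subst (Subst.comp σ τ) := by
  simp only [Lit.subst, Trm.subst_subst]

namespace Clause

theorem subst_cons (σ : Subst F ar) (L : Lit F ar) (C : Clause F ar) :
    Clause.subst σ (L ::ₘ C) = L.subst σ ::ₘ Clause.subst σ C :=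
  Multiset.map_cons _ _ _

theorem subst_subst (σ τ : Subst F ar) (C : Clause F ar) :
    Clause.subst τ (Clause.subst σ C) = Clause.subst (Subst.comp σ τ) C := by
  simp only [Clause.subst, Multiset.map_map, Function.comp_def, Lit.subst_subst]

theorem subst_congr_s14 {σ τ : Subst F ar} {C : Clause F ar}
    (h : ∀ x ∈ Clause.fvars C, σ x = τ x) : Clause.subst σ C = Clause.subst τ C := by
  refine Multiset.map_congr rfl fun L hL => ?_
  have hL' : ∀ x ∈ L.fvars, σ x = τ x := fun x hx => h x ⟨L, hL, hx⟩
  simp only [Lit.subst]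
  rw [Trm.subst_congr_s14 fun x hx => hL' x (Or.inl hx),
    Trm.subst_congr_s14 fun x hx => hL' x (Or.inr hx)]

theorem isGround_subst {σ : Subst F ar} (hσ : ∀ x, (σ x).IsGround) (C : Clause F ar) :
    Clause.IsGround (Clause.subst σ C) := by
  intro L hL
  obtain ⟨L₀, -, rfl⟩ := Multiset.mem_map.1 hL
  exact ⟨Trm.isGround_subst hσ _, Trm.isGround_subst hσ _⟩

end Clause

theorem GroundingFor.isGround_apply {θ : Subst F ar} {C : Clause F ar} (hθ : GroundingFor θ C)
    {x : ℕ} (hx : x ∈ Clause.fvars C) : (θ x).IsGround := by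
  obtain ⟨L, hL, hxL⟩ := hx
  have hLθ : (L.subst θ).IsGround := hθ _ (Multiset.mem_map_of_mem _ hL)
  rcases hxL with hx | hx
  · exact Trm.isGround_apply_of_isGround_subst hLθ.1 x hx
  · exact Trm.isGround_apply_of_isGround_subst hLθ.2 x hx

theorem multGT_add_right {α : Type} {r : α → α → Prop} {X Y : Multiset α} (Z : Multiset α)
    (hX : X ≠ 0) (h : ∀ y ∈ Y, ∃ x ∈ X, r x y) : MultGT r (X + Z) (Y + Z) :=
  ⟨X, Y, Z, hX, add_comm _ _, add_comm _ _, h⟩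

theorem multGT_of_forall_exists {α : Type} {r : α → α → Prop} {N M : Multiset α}
    (hN : N ≠ 0) (h : ∀ y ∈ M, ∃ x ∈ N, r x y) : MultGT r N M := by
  simpa using multGT_add_right 0 hN h

theorem Lit.ms_ne_zero (L : Lit F ar) : L.ms ≠ 0 := by
  unfold Lit.ms; split <;> simp

theorem Lit.lhs_mem_ms (L : Lit F ar) : L.lhs ∈ L.ms := by
  unfold Lit.ms; split <;> simp

theorem Lit.rhs_mem_ms (L : Lit F ar) : L.rhs ∈ L.ms := by
  unfold Lit.ms; split <;> simp

theorem litGT_mk_true {O : SimpOrd F ar} {L : Lit F ar} {l r : Trm F ar}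
    (hL : O.gt L.lhs l ∨ O.gt L.rhs l) (hlr : O.gt l r) : litGT O L (Lit.mk true l r) := by
  obtain ⟨s, hs, hsl⟩ : ∃ s ∈ L.ms, O.gt s l :=
    hL.elim (fun h => ⟨_, L.lhs_mem_ms, h⟩) (fun h => ⟨_, L.rhs_mem_ms, h⟩)
  refine multGT_of_forall_exists L.ms_ne_zero fun y hy => ⟨s, hs, ?_⟩
  simp only [Lit.ms, if_true, Multiset.insert_eq_cons, Multiset.mem_cons,
    Multiset.mem_singleton] at hy
  rcases hy with rfl | rfl
  exacts [hsl, O.trans hsl hlr]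

theorem litGT_mk_of_gt_lhs {O : SimpOrd F ar} (b : Bool) {u u' : Trm F ar} (t : Trm F ar)
    (hu : O.gt u u') : litGT O (Lit.mk b u t) (Lit.mk b u' t) := by
  cases b
  · exact multGT_add_right {t, t} (X := {u, u}) (Y := {u', u'}) (by simp) (by simp [hu])
  · exact multGT_add_right {t} (X := {u}) (Y := {u'}) (by simp) (by simp [hu])

theorem clauseGT_cons {O : SimpOrd F ar} {L L' : Lit F ar} (D : Clause F ar)
    (h : litGT O L L') : clauseGT O (L ::ₘ D) (L' ::ₘ D) := by
  have := multGT_add_right D (X := {L}) (Y := {L'}) (Multiset.singleton_ne_zero L)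
    (by simpa using h)
  rwa [Multiset.singleton_add, Multiset.singleton_add] at this

theorem clauseGT_singleton {O : SimpOrd F ar} {C : Clause F ar} {M L : Lit F ar}
    (hM : M ∈ C) (h : litGT O M L) : clauseGT O C {L} :=
  multGT_of_forall_exists (by rintro rfl; simp at hM) fun _ hy =>
    ⟨M, hM, Multiset.mem_singleton.1 hy ▸ h⟩

namespace RForm

theorem exists_realize_of_realize_foldr_ex (O : SimpOrd F ar) (φ : RForm F ar) :
    ∀ (ys : List ℕ) (θ v : Subst F ar), (∀ x, (v x).IsGround) →
      (RForm.subst θ (ys.foldr RForm.ex φ)).realize O v →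
      ∃ w : Subst F ar, (∀ x, (w x).IsGround) ∧
        (RForm.subst (fun x => if x ∈ ys then Trm.var x else θ x) φ).realize O w
  | [], θ, v, hv, h => ⟨v, hv, by simpa using h⟩
  | y :: ys, θ, v, hv, h => by
    obtain ⟨g, hg, hφ⟩ := h
    have hv' : ∀ x, (Function.update v y g x).IsGround := by
      intro x
      rcases eq_or_ne x y with rfl | hx
      · simpa using hg
      · simpa [Function.update_of_ne hx] using hv x
    obtain ⟨w, hw, hwφ⟩ := exists_realize_of_realize_foldr_ex O φ ys _ _ hv' hφ
    refine ⟨w, hw, ?_⟩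
    convert hwφ using 3 with x
    by_cases hxys : x ∈ ys
    · simp [hxys]
    · by_cases hxy : x = y <;> simp [hxys, hxy]

theorem exists_gt_of_realize_gtForm (O : SimpOrd F ar) (τ w : Subst F ar) (l : Trm F ar)
    (C : Clause F ar) (h : (RForm.subst τ (Clause.gtForm C l)).realize O w) :
    ∃ L ∈ Clause.subst (Subst.comp τ w) C,
      O.gt L.lhs (l.subst (Subst.comp τ w)) ∨ O.gt L.rhs (l.subst (Subst.comp τ w)) := by
  suffices ∀ Ls : List (Lit F ar), (RForm.subst τ
      (Ls.foldr (fun L acc => RForm.or (Lit.gtForm L l) acc) RForm.falsum)).realize O w →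
      ∃ L ∈ Ls, O.gt (L.lhs.subst (Subst.comp τ w)) (l.subst (Subst.comp τ w)) ∨
        O.gt (L.rhs.subst (Subst.comp τ w)) (l.subst (Subst.comp τ w)) by
    obtain ⟨L, hL, hgt⟩ := this C.toList h
    exact ⟨_, Multiset.mem_map_of_mem _ (Multiset.mem_toList.1 hL), hgt⟩
  intro Ls hLs
  induction Ls with
  | nil => exact hLs.elim
  | cons L Ls ih =>
    simp only [List.foldr, RForm.subst, RForm.realize, Lit.gtForm, Trm.subst_subst] at hLs
    rcases hLs with hL | hLs
    · exact ⟨L, List.mem_cons_self, hL⟩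
    · obtain ⟨M, hM, hgt⟩ := ih hLs
      exact ⟨M, List.mem_cons_of_mem _ hM, hgt⟩

end RForm

theorem entails_of_rewrite {l r u t : Trm F ar} {p : List ℕ} (b : Bool) (D : Clause F ar)
    (hp : u.atPos p = some l) :
    Entails {C | C ∈ [{Lit.mk true l r}, Lit.mk b (u.replace p r) t ::ₘ D]}
      (Lit.mk b u t ::ₘ D) := by
  intro A hA v
  obtain ⟨E, hE, hlr⟩ := hA {Lit.mk true l r} (by simp) v
  rw [Multiset.mem_singleton] at hE
  subst hE
  have hu : (u.replace p r).eval A v = u.eval A v :=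
    Trm.eval_replace A v r hp (by simpa [Lit.holds] using hlr.symm)
  obtain ⟨L, hL, hLv⟩ := hA (Lit.mk b (u.replace p r) t ::ₘ D) (by simp) v
  rcases Multiset.mem_cons.1 hL with rfl | hLD
  · exact ⟨_, Multiset.mem_cons_self _ _, by simpa only [Lit.holds, hu] using hLv⟩
  · exact ⟨L, Multiset.mem_cons_of_mem hLD, hLv⟩

theorem redundant_of_rewrite {O : SimpOrd F ar} {S : Set (Clause F ar)} {l r u t : Trm F ar}
    {p : List ℕ} {b : Bool} {D : Clause F ar} (hp : u.atPos p = some l) (hlr : O.gt l r)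
    (hl : ∃ L ∈ Lit.mk b u t ::ₘ D, O.gt L.lhs l ∨ O.gt L.rhs l)
    (hE : {Lit.mk true l r} ∈ S) (hC : Lit.mk b (u.replace p r) t ::ₘ D ∈ S) :
    Redundant O S (Lit.mk b u t ::ₘ D) := by
  refine ⟨_, ?_, entails_of_rewrite (r := r) b D hp, ?_⟩
  · simp only [List.mem_cons, List.not_mem_nil, or_false]
    rintro _ (rfl | rfl) <;> assumption
  · simp only [List.mem_cons, List.not_mem_nil, or_false]
    obtain ⟨L, hL, hLl⟩ := hl
    rintro _ (rfl | rfl)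
    · exact clauseGT_singleton hL (litGT_mk_true hLl hlr)
    · exact clauseGT_cons D (litGT_mk_of_gt_lhs b t (O.gt_replace hp hlr))

theorem demodulation_admissible_general {F : Type} {ar : F → ℕ}
    (O : SimpOrd F ar) (sel : SelFun F ar O) (𝕊 : Saturation O sel) (i : ℕ)
    (l r : Trm F ar) (R₁ : RForm F ar)
    (h₁ : RForm.fvars R₁ ⊆ Clause.fvars ({Lit.mk true l r} : Clause F ar))
    (b : Bool) (u t : Trm F ar) (D₀ : Clause F ar)
    (p : List ℕ) (l' : Trm F ar) (σ : Subst F ar)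
    (hpos : Trm.atPos u p = some l')
    (hmgu : IsMGU σ l l')
    (hp₁ : (⟨{Lit.mk true l r}, R₁, h₁⟩ : PClause F ar) ∈ 𝕊.S i)
    (hcon : (⟨Clause.subst σ (Lit.mk b (Trm.replace u p r) t ::ₘ D₀), RForm.falsum,
        RForm.falsum_fvars_sub _⟩ : PClause F ar) ∈ 𝕊.S i)
    (ys : List ℕ)
    (hys : ∀ x : ℕ, x ∈ ys ↔
      x ∈ (Trm.fvars l ∪ Trm.fvars r) \ Clause.fvars (Lit.mk b u t ::ₘ D₀)) :
    ∀ θ : Subst F ar, GroundingFor θ (Lit.mk b u t ::ₘ D₀) →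
      RSat O θ (ys.foldr RForm.ex
        (RForm.and (RForm.eq l l')
          (RForm.and (RForm.gt l r) (Clause.gtForm (Lit.mk b u t ::ₘ D₀) l)))) →
      Redundant O (gstar (𝕊.S i)) (Clause.subst θ (Lit.mk b u t ::ₘ D₀)) := by
  intro θ hθ hR
  -- `RSat` quantifies over ground valuations; `uθ` shows that one exists.
  have huθ : (u.subst θ).IsGround :=
    (hθ _ (Multiset.mem_map_of_mem _ (Multiset.mem_cons_self _ _))).1
  obtain ⟨w, hw, hunif, hlr, hgt⟩ := RForm.exists_realize_of_realize_foldr_ex O _ ys θ _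
    (fun _ => huθ) (hR _ fun _ => huθ)
  set τ : Subst F ar := fun x => if x ∈ ys then Trm.var x else θ x
  set η := Subst.comp τ w
  simp only [RForm.subst, RForm.realize, Trm.subst_subst] at hunif hlr
  replace hgt := RForm.exists_gt_of_realize_gtForm O τ w l _ hgt
  have hηg : ∀ x, (η x).IsGround := fun x => Trm.isGround_subst hw _
  have hθη :
      Clause.subst θ (Lit.mk b u t ::ₘ D₀) = Clause.subst η (Lit.mk b u t ::ₘ D₀) :=
    Clause.subst_congr_s14 fun x hx => by
      simp only [η, τ, Subst.comp, if_neg fun hxys => ((hys x).1 hxys).2 hx,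
        (hθ.isGround_apply hx).subst_eq]
  obtain ⟨μ, hμ⟩ := hmgu.2 η hunif
  have hconμ : Clause.subst μ (Clause.subst σ (Lit.mk b (u.replace p r) t ::ₘ D₀)) =
      Lit.mk b ((u.subst η).replace p (r.subst η)) (t.subst η) ::ₘ Clause.subst η D₀ := by
    rw [Clause.subst_subst, ← hμ, Clause.subst_cons, Lit.subst, Trm.subst_replace η r hpos]
  rw [Clause.subst_cons] at hgt
  rw [hθη, Clause.subst_cons]
  refine redundant_of_rewrite (hunif ▸ Trm.atPos_subst η hpos) hlr hgt
    ⟨_, hp₁, η, rfl, Clause.isGround_subst hηg {Lit.mk true l r}⟩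
    ⟨_, hcon, μ, hconμ.symm, ?_⟩
  rw [← hconμ, Clause.subst_subst, ← hμ]
  exact Clause.isGround_subst hηg _

/-- Demodulation steps are admissible: if the step `S i` applies a
Sup inference with premises `l ≈ r ⋈ R₁` and `C[l'] ⋈ R₂` and conclusion `C[r]σ`
where `σ = mgu(l, l')`, then the redundancy formula
`∃ȳ (l = l' ∧ l ≻ r ∧ C[l'] ≻ l)` (with `ȳ` the variables of `l, r` not in `C[l']`)
is admissible for `S i` and `C[l']`. -/
theorem demodulation_admissible {F : Type} {ar : F → ℕ} (hF : Finite F) (hconst : ∃ c : F, ar c = 0)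
    (O : SimpOrd F ar) (sel : SelFun F ar O) (𝕊 : Saturation O sel) (i : ℕ)
    (l r : Trm F ar) (R₁ : RForm F ar)
    (h₁ : RForm.fvars R₁ ⊆ Clause.fvars ({Lit.mk true l r} : Clause F ar))
    (b : Bool) (u t : Trm F ar) (D₀ : Clause F ar) (R₂ : RForm F ar)
    (h₂ : RForm.fvars R₂ ⊆ Clause.fvars (Lit.mk b u t ::ₘ D₀))
    (p : List ℕ) (l' : Trm F ar) (σ : Subst F ar)
    (hpos : Trm.atPos u p = some l')
    (hmgu : IsMGU σ l l')
    (hinf : Inf O sel [⟨{Lit.mk true l r}, R₁, h₁⟩, ⟨Lit.mk b u t ::ₘ D₀, R₂, h₂⟩] σ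
      (Clause.subst σ (Lit.mk b (Trm.replace u p r) t ::ₘ D₀)))
    (hp₁ : (⟨{Lit.mk true l r}, R₁, h₁⟩ : PClause F ar) ∈ 𝕊.S i)
    (hp₂ : (⟨Lit.mk b u t ::ₘ D₀, R₂, h₂⟩ : PClause F ar) ∈ 𝕊.S i)
    (hcon : (⟨Clause.subst σ (Lit.mk b (Trm.replace u p r) t ::ₘ D₀), RForm.falsum,
        RForm.falsum_fvars_sub _⟩ : PClause F ar) ∈ 𝕊.S i)
    (ys : List ℕ)
    (hys : ∀ x : ℕ, x ∈ ys ↔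
      x ∈ (Trm.fvars l ∪ Trm.fvars r) \ Clause.fvars (Lit.mk b u t ::ₘ D₀)) :
    ∀ θ : Subst F ar, GroundingFor θ (Lit.mk b u t ::ₘ D₀) →
      RSat O θ (ys.foldr RForm.ex
        (RForm.and (RForm.eq l l')
          (RForm.and (RForm.gt l r) (Clause.gtForm (Lit.mk b u t ::ₘ D₀) l)))) →
      Redundant O (gstar (𝕊.S i)) (Clause.subst θ (Lit.mk b u t ::ₘ D₀)) :=
  demodulation_admissible_general O sel 𝕊 i l r R₁ h₁ b u t D₀ p l' σ hpos hmgu hp₁ hcon ys hys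

end PaRC
end
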